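/- arXiv:2410.04632 — 2 statements merged into one kernel-verified Lean document; each statement's English description precedes it below -/
import Mathlib

section
/- Let t, r be integers and let n(X) denote the number of triples (a, b, c) ∈ ℤ³ with a(t−a) − bc = r, X/2 ≤ |a|, |b|, |c| ≤ X. Then for every ε > 0, n(X) = O_ε(X^{1+ε}) as X → ∞, provided t² − 4r is not a perfect square. -/
/-!
Since `|b|, |c| ≥ X / 2 > 0`, the product `b * c = a * (t - a) - r` is a nonzero integer of size
`O(X²)`, and `(b, c)` is one of its divisor pairs. So each of the `O(X)` admissible values of `a`
contributes at most `2 d(|a * (t - a) - r|) = O_ε(X^ε)` triples, by the divisor bound `d(n) = O_ε(n^ε)`.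
-/

open Finset Real

lemma exists_add_one_le_mul_pow {y : ℝ} (hy : 1 < y) :
    ∃ K : ℝ, 1 ≤ K ∧ ∀ k : ℕ, (k : ℝ) + 1 ≤ K * y ^ k := by
  have hδ : 0 < y - 1 := sub_pos.2 hy
  refine ⟨(y - 1)⁻¹ + 1, by simp [hδ.le], fun k => ?_⟩
  have hinv : (y - 1)⁻¹ * (1 + k * (y - 1)) = (y - 1)⁻¹ + k := by field_simp
  calc (k : ℝ) + 1 ≤ ((y - 1)⁻¹ + 1) * (1 + k * (y - 1)) := by
        nlinarith [inv_pos.2 hδ, (Nat.cast_nonneg k : (0 : ℝ) ≤ k)]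
    _ ≤ ((y - 1)⁻¹ + 1) * y ^ k := by
        gcongr; exact one_add_mul_sub_le_pow (by linarith) k

-- Only primes below `2 ^ ε⁻¹` pay the constant `K`: above it `p ^ ε ≥ 2` and `k + 1 ≤ 2 ^ k`.
lemma exists_add_one_le_mul_rpow_prime_pow {ε : ℝ} (hε : 0 < ε) :
    ∃ K : ℝ, 1 ≤ K ∧ ∀ p k : ℕ, p.Prime →
      (k : ℝ) + 1 ≤ (if p < ⌈(2 : ℝ) ^ ε⁻¹⌉₊ then K else 1) * ((p ^ k : ℕ) : ℝ) ^ ε := by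
  obtain ⟨K, hK, hKk⟩ := exists_add_one_le_mul_pow (one_lt_rpow one_lt_two hε)
  refine ⟨K, hK, fun p k hp => ?_⟩
  have hp2 : (2 : ℝ) ≤ p := by exact_mod_cast hp.two_le
  rw [Nat.cast_pow, ← rpow_pow_comm (by positivity)]
  split_ifs with hsmall
  · calc (k : ℝ) + 1 ≤ K * ((2 : ℝ) ^ ε) ^ k := hKk k
      _ ≤ K * ((p : ℝ) ^ ε) ^ k := by gcongr
  · have hpε : 2 ≤ (p : ℝ) ^ ε :=
      calc (2 : ℝ) = ((2 : ℝ) ^ ε⁻¹) ^ ε := by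
            rw [← rpow_mul zero_le_two, inv_mul_cancel₀ hε.ne', rpow_one]
        _ ≤ (p : ℝ) ^ ε := by
            gcongr; exact (Nat.le_ceil _).trans (by exact_mod_cast not_lt.1 hsmall)
    have := one_add_mul_sub_le_pow (by linarith : (-1 : ℝ) ≤ (p : ℝ) ^ ε) k
    rw [one_mul]
    nlinarith [(Nat.cast_nonneg k : (0 : ℝ) ≤ k)]

theorem exists_card_divisors_le_mul_rpow {ε : ℝ} (hε : 0 < ε) :
    ∃ C : ℝ, 0 ≤ C ∧ ∀ n : ℕ, (#n.divisors : ℝ) ≤ C * (n : ℝ) ^ ε := by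
  obtain ⟨K, hK, hKp⟩ := exists_add_one_le_mul_rpow_prime_pow hε
  set N := ⌈(2 : ℝ) ^ ε⁻¹⌉₊
  refine ⟨K ^ N, by positivity, fun n => ?_⟩
  rcases eq_or_ne n 0 with rfl | hn
  · simp [zero_rpow hε.ne']
  have hsmall : ∏ p ∈ n.primeFactors, (if p < N then K else 1) ≤ K ^ N := by
    rw [← prod_filter, prod_const]
    refine pow_le_pow_right₀ hK ((card_le_card fun p hp => ?_).trans (card_range N).le)
    exact mem_range.2 (mem_filter.1 hp).2
  calc (#n.divisors : ℝ) = ∏ p ∈ n.primeFactors, ((n.factorization p : ℝ) + 1) := by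
        rw [Nat.card_divisors hn]; push_cast; rfl
    _ ≤ ∏ p ∈ n.primeFactors,
          ((if p < N then K else 1) * ((p ^ n.factorization p : ℕ) : ℝ) ^ ε) :=
        prod_le_prod (fun _ _ => by positivity)
          fun p hp => hKp p _ (Nat.prime_of_mem_primeFactors hp)
    _ = (∏ p ∈ n.primeFactors, (if p < N then K else 1)) * (n : ℝ) ^ ε := by
        rw [prod_mul_distrib, finsetProd_rpow _ _ (fun _ _ => by positivity), ← Nat.cast_prod, ←
          Nat.prod_primeFactors_pow_factorization hn]
    _ ≤ K ^ N * (n : ℝ) ^ ε := by gcongr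

lemma Int.card_divisorsAntidiag (z : ℤ) : #z.divisorsAntidiag = 2 * #z.natAbs.divisors := by
  rcases z with n | n <;>
  · simp only [Int.divisorsAntidiag]
    rw [card_disjUnion]
    simp [← Nat.map_div_right_divisors]
    ring

lemma natCard_subtype_le_sum_card {α β : Type*} {P : α × β → Prop} (A : Finset α) (D : α → Finset β)
    (h : ∀ p, P p → p.1 ∈ A ∧ p.2 ∈ D p.1) : Nat.card {p // P p} ≤ ∑ a ∈ A, #(D a) := by
  rw [← card_sigma, ← Nat.card_eq_finsetCard]
  refine Nat.card_le_card_of_injective (fun p => ⟨⟨p.1.1, p.1.2⟩, mem_sigma.2 (h p.1 p.2)⟩) ?_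
  rintro ⟨⟨a, b⟩, _⟩ ⟨⟨a', b'⟩, _⟩ hab
  simp only [Subtype.mk.injEq, Sigma.mk.injEq, heq_eq_eq] at hab
  obtain ⟨rfl, rfl⟩ := hab
  rfl

lemma Int.abs_le_iff_mem_Icc_floor {a : ℤ} {X : ℝ} : |(a : ℝ)| ≤ X ↔ a ∈ Icc (-⌊X⌋) ⌊X⌋ := by
  rw [mem_Icc, ← abs_le, Int.le_floor, Int.cast_abs]

lemma card_Icc_neg_floor_floor_le {X : ℝ} (hX : 0 ≤ X) : (#(Icc (-⌊X⌋) ⌊X⌋) : ℝ) ≤ 2 * X + 1 := by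
  have hfloor : (0 : ℤ) ≤ ⌊X⌋ := Int.floor_nonneg.2 hX
  rw [Int.card_Icc, ← Int.cast_natCast, Int.toNat_of_nonneg (by omega)]
  push_cast
  linarith [Int.floor_le X]

lemma abs_mul_sub_sub_le {a t r X : ℝ} (hX : 1 ≤ X) (ha : |a| ≤ X) :
    |a * (t - a) - r| ≤ (1 + |t| + |r|) * X ^ 2 := by
  calc |a * (t - a) - r| ≤ |a| * |t - a| + |r| := by rw [← abs_mul]; exact abs_sub _ _
    _ ≤ |a| * (|t| + |a|) + |r| := by gcongr; exact abs_sub _ _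
    _ ≤ X * (|t| + X) + |r| := by gcongr
    _ ≤ (1 + |t| + |r|) * X ^ 2 := by
        have hX1 : 0 ≤ X * (X - 1) := by nlinarith
        nlinarith [mul_nonneg (abs_nonneg t) hX1, mul_nonneg (abs_nonneg r) hX1]

lemma mem_divisorsAntidiag_of_sub_mul_eq {a b c t r : ℤ} (h : a * (t - a) - b * c = r)
    (hb : b ≠ 0) (hc : c ≠ 0) : (b, c) ∈ (a * (t - a) - r).divisorsAntidiag := by
  rw [Int.prodMk_mem_divisorsAntidiag (by rw [← h, sub_sub_cancel]; exact mul_ne_zero hb hc)]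
  linarith

lemma card_divisorsAntidiag_le {C ε Y : ℝ} (hC : 0 ≤ C) (hε : 0 ≤ ε)
    (hdiv : ∀ n : ℕ, (#n.divisors : ℝ) ≤ C * (n : ℝ) ^ ε) {z : ℤ} (hz : |(z : ℝ)| ≤ Y) :
    (#z.divisorsAntidiag : ℝ) ≤ 2 * C * Y ^ ε := by
  rw [Int.card_divisorsAntidiag, mul_assoc]
  push_cast
  gcongr
  refine (hdiv _).trans ?_
  gcongr
  rwa [Nat.cast_natAbs, Int.cast_abs]

theorem stmt9_general (t r : ℤ) (ε : ℝ) (hε : 0 < ε) :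
    ∃ C : ℝ, ∀ X : ℝ, 1 ≤ X →
      (Nat.card {p : ℤ × ℤ × ℤ // p.1 * (t - p.1) - p.2.1 * p.2.2 = r ∧
        X / 2 ≤ |(p.1 : ℝ)| ∧ |(p.1 : ℝ)| ≤ X ∧
        X / 2 ≤ |(p.2.1 : ℝ)| ∧ |(p.2.1 : ℝ)| ≤ X ∧
        X / 2 ≤ |(p.2.2 : ℝ)| ∧ |(p.2.2 : ℝ)| ≤ X} : ℝ) ≤ C * X ^ (1 + ε) := by
  obtain ⟨C, hC, hdiv⟩ := exists_card_divisors_le_mul_rpow (half_pos hε)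
  set T := 1 + |(t : ℝ)| + |(r : ℝ)|
  refine ⟨6 * C * T ^ (ε / 2), fun X hX => ?_⟩
  have hX0 : 0 < X := by linarith
  have hsupport : ∀ p : ℤ × ℤ × ℤ, p.1 * (t - p.1) - p.2.1 * p.2.2 = r ∧
      X / 2 ≤ |(p.1 : ℝ)| ∧ |(p.1 : ℝ)| ≤ X ∧
      X / 2 ≤ |(p.2.1 : ℝ)| ∧ |(p.2.1 : ℝ)| ≤ X ∧
      X / 2 ≤ |(p.2.2 : ℝ)| ∧ |(p.2.2 : ℝ)| ≤ X →
      p.1 ∈ Icc (-⌊X⌋) ⌊X⌋ ∧ p.2 ∈ (p.1 * (t - p.1) - r).divisorsAntidiag := by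
    rintro ⟨a, b, c⟩ ⟨heq, -, ha, hb, -, hc, -⟩
    have hb0 : b ≠ 0 := by rintro rfl; norm_num at hb; linarith
    have hc0 : c ≠ 0 := by rintro rfl; norm_num at hc; linarith
    exact ⟨Int.abs_le_iff_mem_Icc_floor.1 ha, mem_divisorsAntidiag_of_sub_mul_eq heq hb0 hc0⟩
  calc _ ≤ ((∑ a ∈ Icc (-⌊X⌋) ⌊X⌋, #(a * (t - a) - r).divisorsAntidiag : ℕ) : ℝ) :=
        Nat.cast_le.2 (natCard_subtype_le_sum_card _ _ hsupport)
    _ ≤ ∑ a ∈ Icc (-⌊X⌋) ⌊X⌋, 2 * C * (T * X ^ 2) ^ (ε / 2) := by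
        push_cast
        refine sum_le_sum fun a ha => card_divisorsAntidiag_le hC (by positivity) hdiv ?_
        push_cast
        exact abs_mul_sub_sub_le hX (Int.abs_le_iff_mem_Icc_floor.2 ha)
    _ ≤ (2 * X + 1) * (2 * C * (T * X ^ 2) ^ (ε / 2)) := by
        rw [sum_const, nsmul_eq_mul]
        gcongr
        exact card_Icc_neg_floor_floor_le hX0.le
    _ ≤ 3 * X * (2 * C * (T * X ^ 2) ^ (ε / 2)) := by gcongr; linarith
    _ = 6 * C * T ^ (ε / 2) * X ^ (1 + ε) := by
        rw [mul_rpow (by positivity) (by positivity), ← rpow_natCast, ← rpow_mul hX0.le,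
          rpow_add hX0, rpow_one, Nat.cast_ofNat, mul_div_cancel₀ _ two_ne_zero]
        ring

theorem stmt9 (t r : ℤ) (h : ¬ ∃ s : ℤ, s ^ 2 = t ^ 2 - 4 * r) (ε : ℝ) (hε : 0 < ε) :
    ∃ C : ℝ, ∀ X : ℝ, 1 ≤ X →
      (Nat.card {p : ℤ × ℤ × ℤ // p.1 * (t - p.1) - p.2.1 * p.2.2 = r ∧
        X / 2 ≤ |(p.1 : ℝ)| ∧ |(p.1 : ℝ)| ≤ X ∧
        X / 2 ≤ |(p.2.1 : ℝ)| ∧ |(p.2.1 : ℝ)| ≤ X ∧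
        X / 2 ≤ |(p.2.2 : ℝ)| ∧ |(p.2.2 : ℝ)| ≤ X} : ℝ) ≤ C * X ^ (1 + ε) :=
  stmt9_general t r ε hε
end

section
/- Let f : ℝ → ℂ be a Schwartz function, q a positive integer, and α an integer. Then Σ_{n ≡ α mod q} f(n) = (1/q) Σ_{m ∈ ℤ} e(αm/q) · f̂(m/q), where f̂(ξ) = ∫ f(x) e(−xξ) dx and e(x) = exp(2πix). -/
open scoped Real

/-- `e(x) = exp(2πix)`. -/
noncomputable def e (x : ℝ) : ℂ := Complex.exp (2 * π * Complex.I * x)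

/-- The Fourier transform with the `e(−xξ)` convention. -/
noncomputable def fourierHat (f : ℝ → ℂ) (ξ : ℝ) : ℂ := ∫ x : ℝ, f x * e (-(x * ξ))

/-!
Apply Poisson summation `∑ g(x + n) = ∑ ĝ(m) e(mx)` to the dilate `g(x) = f(qx)` at `x = α/q`:
the left side becomes the sum of `f` over the progression `α + qℤ`, and `ĝ(m) = q⁻¹ f̂(m/q)`.
-/

open MeasureTheory FourierTransform SchwartzMap

theorem fourierHat_eq_fourier (f : ℝ → ℂ) (ξ : ℝ) : fourierHat f ξ = 𝓕 f ξ := by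
  rw [Real.fourier_real_eq_integral_exp_smul, fourierHat]
  congr 1 with x
  rw [smul_eq_mul, mul_comm, e]
  push_cast
  ring_nf

theorem fourier_coe_eq_e (m : ℤ) (x : ℝ) : fourier m (x : UnitAddCircle) = e (m * x) := by
  rw [fourier_coe_apply, e]
  push_cast
  ring_nf

theorem Real.fourier_comp_mul_left {E : Type*} [NormedAddCommGroup E] [NormedSpace ℂ E]
    (f : ℝ → E) {c : ℝ} (hc : c ≠ 0) (ξ : ℝ) :
    𝓕 (fun x ↦ f (c * x)) ξ = |c|⁻¹ • 𝓕 f (ξ / c) := by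
  have hphase : ∀ x : ℝ, -(x * ξ) = -(c * x * (ξ / c)) := fun x ↦ by field_simp
  simp_rw [Real.fourier_real_eq, hphase]
  rw [Measure.integral_comp_mul_left (fun y ↦ 𝐞 (-(y * (ξ / c))) • f y), abs_inv]

theorem SchwartzMap.tsum_comp_add_mul_eq_tsum_fourier (f : 𝓢(ℝ, ℂ)) {c : ℝ} (hc : c ≠ 0)
    (a : ℝ) :
    ∑' n : ℤ, f (a + c * n) = |c|⁻¹ • ∑' m : ℤ, e (m * (a / c)) * 𝓕 (f : ℝ → ℂ) (m / c) := by
  let dilation : ℝ ≃L[ℝ] ℝ := (LinearEquiv.smulOfNeZero ℝ ℝ c hc).toContinuousLinearEquiv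
  let g : 𝓢(ℝ, ℂ) := compCLMOfContinuousLinearEquiv ℝ dilation f
  have hg : ∀ x, g x = f (c * x) := fun _ ↦ rfl
  have hshift : ∀ n : ℤ, g (a / c + n) = f (a + c * n) := fun n ↦ by
    rw [hg, mul_add, mul_div_cancel₀ a hc]
  have hFg : ∀ m : ℤ, 𝓕 g m = |c|⁻¹ • 𝓕 (f : ℝ → ℂ) (m / c) := fun m ↦
    Real.fourier_comp_mul_left f hc m
  simp_rw [← hshift, tsum_eq_tsum_fourier g (a / c), hFg, fourier_coe_eq_e,
    ← tsum_const_smul'' (|c|⁻¹ : ℝ), smul_mul_assoc, mul_comm]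

theorem stmt17 (f : SchwartzMap ℝ ℂ) (q : ℕ) (hq : 0 < q) (α : ℤ) :
    ∑' n : ℤ, f ((α : ℝ) + (q : ℝ) * (n : ℝ)) =
      (1 / (q : ℂ)) * ∑' m : ℤ, e (((α * m : ℤ) : ℝ) / (q : ℝ)) * fourierHat f ((m : ℝ) / (q : ℝ)) := by
  have hq' : (0 : ℝ) < q := Nat.cast_pos.mpr hq
  rw [SchwartzMap.tsum_comp_add_mul_eq_tsum_fourier f hq'.ne' α, abs_of_pos hq',
    Complex.real_smul]
  simp_rw [fourierHat_eq_fourier]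
  push_cast
  rw [one_div]
  congr 2 with m
  rw [mul_div_assoc', mul_comm (α : ℝ)]
end
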